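/- arXiv:2602.18953 — 2 statements merged into one kernel-verified Lean document; each statement's English description precedes it below -/
import Mathlib

section
/- Let $(U_k)_{k\ge1}$ be i.i.d. uniform on $(0,1)$, and let $p \ge 1/2$. Define recursively $\tilde{Z}_0 = 0$, $\tilde{Z}_k = \tilde{Z}_{k-1} + \eta_k$ where $\eta_k = 1$ if $\tilde{Z}_{k-1} = 0$, and otherwise $\eta_k = \pm 1$ according to whether $U_k < \frac{1}{2} + \frac{(2p-1)\tilde{Z}_{k-1}}{k-1}$ or not; and define $\tilde{S}_0 = 0$, $\tilde{S}_k = \tilde{S}_{k-1} + \xi_k$ where $\xi_k = 1$ if $\tilde{S}_{k-1} = 0$, and otherwise $\xi_k = \pm 1$ according to whether $U_k < 1/2$ or not. Then $\tilde{Z}_k \ge \tilde{S}_k$ for all $k \ge 0$. -/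
open MeasureTheory ProbabilityTheory

/-- coupling of the reflected Elephant Random Walk (memory `p ≥ 1/2`) with
the reflected symmetric simple random walk driven by the same i.i.d. uniforms `(U_k)`:
pathwise, `Z̃_k ≥ S̃_k` for all `k ≥ 0`. -/
theorem erw_paper_stmt_9
    {Ω : Type*} [MeasurableSpace Ω] (μ : Measure Ω) [IsProbabilityMeasure μ]
    (U : ℕ → Ω → ℝ) (hUmeas : ∀ k, Measurable (U k))
    (hUindep : iIndepFun U μ)
    (hUunif : ∀ k, 1 ≤ k → μ.map (U k) = volume.restrict (Set.Ioo (0 : ℝ) 1))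
    (p : ℝ) (hp : 1 / 2 ≤ p) (hp1 : p ≤ 1)
    (Z : ℕ → Ω → ℤ) (hZ0 : ∀ ω, Z 0 ω = 0)
    (hZ : ∀ k, 1 ≤ k → ∀ ω,
      Z k ω = Z (k - 1) ω
        + (if Z (k - 1) ω = 0 then 1
           else if U k ω < 1 / 2 + (2 * p - 1) * ((Z (k - 1) ω : ℝ)) / ((k : ℝ) - 1)
             then 1 else -1))
    (S : ℕ → Ω → ℤ) (hS0 : ∀ ω, S 0 ω = 0)
    (hSrec : ∀ k, 1 ≤ k → ∀ ω,
      S k ω = S (k - 1) ω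
        + (if S (k - 1) ω = 0 then 1 else if U k ω < 1 / 2 then 1 else -1)) :
    ∀ ω, ∀ k : ℕ, S k ω ≤ Z k ω := by
  intro ω k
  suffices h : ∀ k, 0 ≤ S k ω ∧ 0 ≤ Z k ω ∧ S k ω ≤ Z k ω ∧ (Z k ω - S k ω) % 2 = 0 by
    exact (h k).2.2.1
  intro k
  induction k with
  | zero => simp [hZ0, hS0]
  | succ n ih =>
    obtain ⟨hs0, hz0, hsz, heven⟩ := ih
    have hSk := hSrec (n + 1) (by omega) ω
    have hZk := hZ (n + 1) (by omega) ω
    simp only [Nat.add_sub_cancel] at hSk hZk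
    by_cases hz : Z n ω = 0
    · have hs : S n ω = 0 := le_antisymm (hz ▸ hsz) hs0
      rw [hSk, hZk, hs, hz]
      simp
    · have hn1 : 1 ≤ n := by
        by_contra h
        push_neg at h
        interval_cases n
        exact hz (hZ0 ω)
      have hzpos : 1 ≤ Z n ω := lt_of_le_of_ne hz0 (Ne.symm hz)
      have hthr : (1 : ℝ) / 2 ≤
          1 / 2 + (2 * p - 1) * ((Z n ω : ℝ)) / (((n + 1 : ℕ) : ℝ) - 1) := by
        have h1 : (0 : ℝ) ≤ 2 * p - 1 := by linarith
        have h2 : (0 : ℝ) ≤ (Z n ω : ℝ) := by exact_mod_cast hz0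
        have h3 : (0 : ℝ) ≤ ((n + 1 : ℕ) : ℝ) - 1 := by
          push_cast
          simp
        have := div_nonneg (mul_nonneg h1 h2) h3
        linarith
      rw [hSk, hZk]
      by_cases hs : S n ω = 0
      · rw [hs]
        simp only [if_pos rfl, if_neg hz]
        split_ifs <;> omega
      · simp only [if_neg hz, if_neg hs]
        by_cases heq : S n ω = Z n ω
        · by_cases hU : U (n + 1) ω < 1 / 2
          · rw [if_pos hU, if_pos (lt_of_lt_of_le hU hthr)]
            omega
          · rw [if_neg hU]
            split_ifs <;> omega
        · split_ifs <;> omega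
end

section
/- Let $p < 1/2$, $d = \lceil 24(1-2p) \rceil + 1$ and $c > 12 + d$. Then for the reflected Elephant Random Walk started at any $x < N$, $\mathbb{P}_x(\tau_N > cN^2) \le 5/6$, where $\tau_N = \inf\{k \ge 1 : |Z_k| = N\}$. -/
open MeasureTheory ProbabilityTheory


namespace ERW12

open scoped Classical in
noncomputable def ewalk (q : ℝ) (M : ℤ) (u : ℕ → ℝ) : ℕ → ℤ
  | 0 => 0
  | j+1 =>
    if ewalk q M u j = M then M
    else if ewalk q M u j = 0 then 1
    else ewalk q M u j + (if u (j+1) < q then 1 else -1)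

open scoped Classical in
lemma ewalk_succ (q : ℝ) (M : ℤ) (u : ℕ → ℝ) (j : ℕ) :
    ewalk q M u (j+1) =
      if ewalk q M u j = M then M
      else if ewalk q M u j = 0 then 1
      else ewalk q M u j + (if u (j+1) < q then 1 else -1) := by
  rw [ewalk]

lemma ewalk_nonneg {q : ℝ} {M : ℤ} (hM : 1 ≤ M) (u : ℕ → ℝ) :
    ∀ j, 0 ≤ ewalk q M u j := by
  intro j
  induction j with
  | zero => simp [ewalk]
  | succ j ih =>
    rw [ewalk_succ]
    split_ifs <;> omega

lemma ewalk_le {q : ℝ} {M : ℤ} (hM : 1 ≤ M) (u : ℕ → ℝ) :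
    ∀ j, ewalk q M u j ≤ M := by
  intro j
  induction j with
  | zero => simp [ewalk]; omega
  | succ j ih =>
    rw [ewalk_succ]
    split_ifs with h1 h2 h3 <;> omega

lemma ewalk_congr {q : ℝ} {M : ℤ} {u u' : ℕ → ℝ} {j : ℕ}
    (h : ∀ i, 1 ≤ i → i ≤ j → u i = u' i) :
    ewalk q M u j = ewalk q M u' j := by
  induction j with
  | zero => simp [ewalk]
  | succ j ih =>
    have hij : ewalk q M u j = ewalk q M u' j :=
      ih (fun i h1 h2 => h i h1 (h2.trans (Nat.le_succ j)))
    rw [ewalk_succ, ewalk_succ, hij, h (j+1) (by omega) le_rfl]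

lemma ewalk_absorb {q : ℝ} {M : ℤ} {u : ℕ → ℝ} {j k : ℕ}
    (h : ewalk q M u j = M) (hjk : j ≤ k) : ewalk q M u k = M := by
  induction k with
  | zero => exact (Nat.le_zero.mp hjk ▸ h)
  | succ k ih =>
    rcases Nat.lt_or_ge j (k+1) with hlt | hge
    · have hk : ewalk q M u k = M := ih (by omega)
      rw [ewalk_succ, if_pos hk]
    · have : j = k + 1 := by omega
      exact this ▸ h

lemma ewalk_measurable {α : Type*} [MeasurableSpace α] (V : ℕ → α → ℝ)
    (hV : ∀ i, Measurable (V i)) (q : ℝ) (M : ℤ) (j : ℕ) :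
    Measurable (fun a => ewalk q M (fun i => V i a) j) := by
  classical
  induction j with
  | zero => simp only [ewalk]; exact measurable_const
  | succ j ih =>
    simp only [ewalk_succ]
    refine Measurable.ite (ih (measurableSet_singleton M)) measurable_const ?_
    refine Measurable.ite (ih (measurableSet_singleton 0)) measurable_const ?_
    refine Measurable.add ih ?_
    exact Measurable.ite ((hV (j+1)) measurableSet_Iio) measurable_const measurable_const

end ERW12


namespace ERW12

lemma integrable_of_bdd {Ω : Type*} [MeasurableSpace Ω] {μ : Measure Ω} [IsProbabilityMeasure μ]
    {f : Ω → ℝ} (hm : Measurable f) (C : ℝ) (h : ∀ ω, |f ω| ≤ C) : Integrable f μ :=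
  Integrable.mono' (integrable_const C) hm.aestronglyMeasurable
    (Filter.Eventually.of_forall (by simpa [Real.norm_eq_abs] using h))

lemma unif_exp {Ω : Type*} [MeasurableSpace Ω] (μ : Measure Ω) [IsProbabilityMeasure μ]
    (X : Ω → ℝ) (hm : Measurable X) (hlaw : μ.map X = volume.restrict (Set.Ioo (0:ℝ) 1))
    (q : ℝ) (hq0 : 0 ≤ q) (hq1 : q ≤ 1) :
    ∫ ω, (if X ω < q then (1:ℝ) else -1) ∂μ = 2*q - 1 := by
  classical
  have hs : MeasurableSet (X ⁻¹' Set.Iio q) := hm measurableSet_Iio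
  have hμ : μ (X ⁻¹' Set.Iio q) = ENNReal.ofReal q := by
    rw [← Measure.map_apply hm measurableSet_Iio, hlaw,
      Measure.restrict_apply measurableSet_Iio]
    have hset : Set.Iio q ∩ Set.Ioo (0:ℝ) 1 = Set.Ioo 0 q := by
      ext y
      simp only [Set.mem_inter_iff, Set.mem_Iio, Set.mem_Ioo]
      constructor
      · rintro ⟨h1, h2, h3⟩; exact ⟨h2, h1⟩
      · rintro ⟨h1, h2⟩; exact ⟨h2, h1, lt_of_lt_of_le h2 hq1⟩
    rw [hset, Real.volume_Ioo]
    simp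
  have hpt : (fun ω => if X ω < q then (1:ℝ) else -1)
      = fun ω => 2 * Set.indicator (X ⁻¹' Set.Iio q) (fun _ => (1:ℝ)) ω - 1 := by
    funext ω
    by_cases h : X ω < q
    · rw [if_pos h, Set.indicator_of_mem (by exact h)]
      norm_num
    · rw [if_neg h, Set.indicator_of_notMem (by exact h)]
      norm_num
  rw [hpt]
  have hind : Integrable (Set.indicator (X ⁻¹' Set.Iio q) (fun _ => (1:ℝ))) μ :=
    (integrable_const (1:ℝ)).indicator hs
  rw [integral_sub (hind.const_mul 2) (integrable_const 1)]
  rw [integral_const_mul, integral_indicator_const (1:ℝ) hs, integral_const]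
  simp [Measure.real, hμ, ENNReal.toReal_ofReal hq0]

end ERW12
set_option maxHeartbeats 1000000 in
/-- let `p < 1/2`, `d = ⌈24(1-2p)⌉ + 1` and `c > 12 + d`. For the reflected
Elephant Random Walk started at any state `x < N` (at an arbitrary time offset `m`),
`P_x(τ_N > cN²) ≤ 5/6`, where `τ_N` is the first time the walk reaches `N`. -/
theorem erw_paper_stmt_12
    {Ω : Type*} [MeasurableSpace Ω] (μ : Measure Ω) [IsProbabilityMeasure μ]
    (U : ℕ → Ω → ℝ) (hUmeas : ∀ k, Measurable (U k))
    (hUindep : iIndepFun U μ)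
    (hUunif : ∀ k, 1 ≤ k → μ.map (U k) = volume.restrict (Set.Ioo (0 : ℝ) 1))
    (p : ℝ) (hp0 : 0 < p) (hp : p < 1 / 2)
    (d : ℕ) (hd : (d : ℝ) = (⌈(24 * (1 - 2 * p) : ℝ)⌉ : ℝ) + 1)
    (c : ℝ) (hc : 12 + (d : ℝ) < c)
    (N : ℕ) (hN : 1 ≤ N)
    (x : ℤ) (hx0 : 0 ≤ x) (hx : x < (N : ℤ))
    (m : ℕ) (hm : 1 ≤ m)
    (Z : ℕ → Ω → ℤ) (hZ0 : ∀ ω, Z 0 ω = x)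
    (hZ : ∀ k, 1 ≤ k → ∀ ω,
      Z k ω = Z (k - 1) ω
        + (if Z (k - 1) ω = 0 then 1
           else if U k ω < 1 / 2 + (2 * p - 1) * ((Z (k - 1) ω : ℝ))
                            / ((m : ℝ) + (k : ℝ) - 1)
             then 1 else -1))
    (τ : Ω → ℕ) (hτ : ∀ ω, τ ω = sInf {k : ℕ | 1 ≤ k ∧ Z k ω = (N : ℤ)}) :
    μ {ω | c * (N : ℝ) ^ 2 < (τ ω : ℝ)} ≤ ENNReal.ofReal (5 / 6) := by
  classical
  have hNR : (1:ℝ) ≤ (N:ℝ) := by exact_mod_cast hN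
  have hNZ1 : (1:ℤ) ≤ (N:ℤ) := by exact_mod_cast hN
  obtain ⟨r, hrdef⟩ : ∃ r : ℝ, r = 1 - 2*p := ⟨_, rfl⟩
  have hr0 : 0 < r := by rw [hrdef]; linarith
  have hr24 : 24 * r < (d:ℝ) := by
    rw [hd]
    have h1 := Int.le_ceil (24 * (1 - 2*p) : ℝ)
    rw [hrdef]; push_cast; linarith
  have hd0 : (0:ℝ) < d := by nlinarith
  have hdN0 : (0:ℝ) < (d:ℝ) * N := by nlinarith
  obtain ⟨q, hqdef⟩ : ∃ q : ℝ, q = 1/2 - r/((d:ℝ)*N) := ⟨_, rfl⟩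
  have hgam0 : 0 < r/((d:ℝ)*N) := div_pos hr0 hdN0
  have hgam : r/((d:ℝ)*N) < 1/24 := by
    rw [div_lt_iff₀ hdN0]; nlinarith
  have hq0 : 0 < q := by rw [hqdef]; linarith
  have hqh : q ≤ 1/2 := by rw [hqdef]; linarith
  obtain ⟨K, hKdef⟩ : ∃ K : ℕ, K = d * N^2 := ⟨_, rfl⟩
  obtain ⟨T, hTdef⟩ : ∃ T : ℕ, T = 12 * N^2 := ⟨_, rfl⟩
  have hN2 : 1 ≤ N^2 := Nat.one_le_pow _ _ (by omega)
  have hT0 : 0 < T := by rw [hTdef]; omega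
  obtain ⟨M, hMdef⟩ : ∃ M : ℤ, M = (N:ℤ) + 1 := ⟨_, rfl⟩
  have hM1 : (1:ℤ) ≤ M := by omega
  obtain ⟨Y, hYdef⟩ : ∃ Y : ℕ → Ω → ℤ,
      Y = fun j ω => ERW12.ewalk q M (fun i => U (K+i) ω) j := ⟨_, rfl⟩
  have hYmeas : ∀ j, Measurable (Y j) := by
    intro j
    rw [hYdef]
    exact ERW12.ewalk_measurable (fun i => U (K+i)) (fun i => hUmeas _) q M j
  have hYnn : ∀ j ω, 0 ≤ Y j ω := by
    intro j ω; rw [hYdef]; exact ERW12.ewalk_nonneg hM1 _ j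
  have hYle : ∀ j ω, Y j ω ≤ M := by
    intro j ω; rw [hYdef]; exact ERW12.ewalk_le hM1 _ j
  obtain ⟨A, hAdef⟩ : ∃ A : Set Ω, A = {ω | Y T ω ≤ (N:ℤ)} := ⟨_, rfl⟩
  have hiicm : MeasurableSet (Set.Iic (N:ℤ)) := MeasurableSpace.measurableSet_top
  have hAm : MeasurableSet A := by rw [hAdef]; exact (hYmeas T) hiicm
  -- the inclusion
  have hsub : {ω | c * (N:ℝ)^2 < (τ ω : ℝ)} ⊆ A := by
    intro ω hω
    have hω' : c * (N:ℝ)^2 < (τ ω : ℝ) := hω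
    have hKT : ((K + T : ℕ) : ℝ) < c * (N:ℝ)^2 := by
      rw [hKdef, hTdef]
      push_cast
      nlinarith [mul_pos (show (0:ℝ) < c - 12 - (d:ℝ) by linarith)
        (show (0:ℝ) < (N:ℝ)^2 by nlinarith)]
    have hτKT : K + T < τ ω := by exact_mod_cast lt_trans hKT hω'
    have hZne : ∀ k, 1 ≤ k → k ≤ K + T → Z k ω ≠ (N:ℤ) := by
      intro k h1 h2 he
      have : τ ω ≤ k := by rw [hτ ω]; exact Nat.sInf_le ⟨h1, he⟩
      omega
    have hZnn : ∀ k, 0 ≤ Z k ω := by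
      intro k
      induction k with
      | zero => rw [hZ0]; exact hx0
      | succ k ih =>
        have h := hZ (k+1) (by omega) ω
        simp only [Nat.add_sub_cancel] at h
        rw [h]
        split_ifs with h1 h2 <;> omega
    have hZle : ∀ k, k ≤ K + T → Z k ω ≤ (N:ℤ) - 1 := by
      intro k
      induction k with
      | zero => intro _; rw [hZ0]; omega
      | succ k ih =>
        intro hk
        have h := hZ (k+1) (by omega) ω
        simp only [Nat.add_sub_cancel] at h
        have hne := hZne (k+1) (by omega) hk
        have hik := ih (by omega)
        rw [h] at hne ⊢
        split_ifs at hne ⊢ with h1 h2 <;> omega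
    have hstep : ∀ j, 1 ≤ j → j ≤ T →
        (U (K+j) ω < q → Z (K+j) ω = Z (K+j-1) ω + 1) ∧
        (Z (K+j) ω = Z (K+j-1) ω + 1 ∨ Z (K+j) ω = Z (K+j-1) ω - 1) := by
      intro j h1 hjT
      have h := hZ (K+j) (by omega) ω
      constructor
      · intro hU
        rw [h]
        by_cases h0 : Z (K+j-1) ω = 0
        · rw [if_pos h0]
        · have hzl : Z (K+j-1) ω ≤ (N:ℤ) - 1 := hZle _ (by omega)
          have hznn : 0 ≤ Z (K+j-1) ω := hZnn _
          have hzR : (0:ℝ) ≤ ((Z (K+j-1) ω : ℤ) : ℝ) := by exact_mod_cast hznn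
          have hzRN : ((Z (K+j-1) ω : ℤ) : ℝ) ≤ (N:ℝ) := by
            have h2 : Z (K+j-1) ω ≤ (N:ℤ) := by omega
            exact_mod_cast h2
          have hKr : ((K:ℕ):ℝ) = (d:ℝ) * (N:ℝ)^2 := by rw [hKdef]; push_cast; ring
          have hden : ((d:ℝ) * (N:ℝ)^2) ≤ (m:ℝ) + ((K+j:ℕ):ℝ) - 1 := by
            have hm1 : (1:ℝ) ≤ (m:ℝ) := by exact_mod_cast hm
            have hKj : ((K:ℕ):ℝ) ≤ ((K+j:ℕ):ℝ) := by exact_mod_cast Nat.le_add_right K j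
            linarith
          have hdN2 : (0:ℝ) < (d:ℝ) * (N:ℝ)^2 := by nlinarith
          have hden0 : (0:ℝ) < (m:ℝ) + ((K+j:ℕ):ℝ) - 1 := by linarith
          have hdiv : r * ((Z (K+j-1) ω : ℤ) : ℝ) / ((m:ℝ) + ((K+j:ℕ):ℝ) - 1) ≤ r / ((d:ℝ)*N) := by
            rw [div_le_div_iff₀ hden0 hdN0]
            have hb1 : ((Z (K+j-1) ω : ℤ) : ℝ) * ((d:ℝ)*N) ≤ (N:ℝ) * ((d:ℝ)*N) :=
              mul_le_mul_of_nonneg_right hzRN hdN0.le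
            have hb2 : r * ((d:ℝ)*(N:ℝ)^2) ≤ r * ((m:ℝ) + ((K+j:ℕ):ℝ) - 1) :=
              mul_le_mul_of_nonneg_left hden hr0.le
            have hb3 : r * (((Z (K+j-1) ω : ℤ) : ℝ) * ((d:ℝ)*N)) ≤ r * ((N:ℝ) * ((d:ℝ)*N)) :=
              mul_le_mul_of_nonneg_left hb1 hr0.le
            nlinarith [hb2, hb3]
          have heq : 1/2 + (2*p-1) * ((Z (K+j-1) ω : ℤ) : ℝ) / ((m:ℝ) + ((K+j:ℕ):ℝ) - 1)
              = 1/2 - r * ((Z (K+j-1) ω : ℤ) : ℝ) / ((m:ℝ) + ((K+j:ℕ):ℝ) - 1) := by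
            rw [hrdef]; ring
          have hqle : q ≤ 1/2 - r * ((Z (K+j-1) ω : ℤ) : ℝ) / ((m:ℝ) + ((K+j:ℕ):ℝ) - 1) := by
            rw [hqdef]; linarith
          have hcond : U (K+j) ω < 1/2 + (2*p-1) * ((Z (K+j-1) ω : ℤ) : ℝ)
              / ((m:ℝ) + ((K+j:ℕ):ℝ) - 1) := by
            rw [heq]; linarith
          rw [if_neg h0, if_pos hcond]
      · rw [h]
        split_ifs with h1 h2
        · left; rfl
        · left; rfl
        · right; rfl
    have hcouple : ∀ j, j ≤ T → Y j ω ≤ Z (K+j) ω + 1 := by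
      intro j
      induction j with
      | zero =>
        intro _
        have h0 : Y 0 ω = 0 := by simp [hYdef, ERW12.ewalk]
        rw [h0]
        have := hZnn (K+0)
        omega
      | succ j ih =>
        intro hj
        have hyz := ih (by omega)
        have hzle : Z (K+j) ω ≤ (N:ℤ) - 1 := hZle _ (by omega)
        have hyN : Y j ω ≤ (N:ℤ) := by omega
        have hyM : Y j ω ≠ M := by omega
        have hynn : 0 ≤ Y j ω := hYnn j ω
        have hstep' := hstep (j+1) (by omega) (by omega)
        have hKj : K + (j+1) - 1 = K + j := by omega
        rw [hKj] at hstep'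
        have hsucc : Y (j+1) ω = if Y j ω = M then M
            else if Y j ω = 0 then 1
            else Y j ω + (if U (K+(j+1)) ω < q then 1 else -1) := by
          rw [hYdef]; exact ERW12.ewalk_succ q M _ j
        rw [hsucc, if_neg hyM]
        by_cases hy0 : Y j ω = 0
        · rw [if_pos hy0]
          have := hZnn (K+(j+1))
          omega
        · rw [if_neg hy0]
          by_cases hu : U (K+(j+1)) ω < q
          · rw [if_pos hu]
            have h1 := hstep'.1 hu
            omega
          · rw [if_neg hu]
            have h2 := hstep'.2
            omega
    have hYT := hcouple T le_rfl
    have hzT := hZle (K+T) le_rfl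
    rw [hAdef]
    show Y T ω ≤ (N:ℤ)
    omega
  -- probability estimate
  have hEe : ∀ j : ℕ, ∫ ω, (if U (K+(j+1)) ω < q then (1:ℝ) else -1) ∂μ = 2*q - 1 := fun j =>
    ERW12.unif_exp μ (U (K+(j+1))) (hUmeas _) (hUunif _ (by omega)) q hq0.le (by linarith)
  obtain ⟨bval, hbdef⟩ : ∃ bval : ℤ → ℝ,
      bval = fun y => if 1 ≤ y ∧ y ≤ (N:ℤ) then 2*(y:ℝ) else 0 := ⟨_, rfl⟩
  have hbval_meas : Measurable bval := by rw [hbdef]; exact measurable_from_top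
  have hbval_nn : ∀ y, 0 ≤ bval y := by
    intro y; rw [hbdef]; dsimp only; split_ifs with h
    · have h1 : (1:ℝ) ≤ (y:ℝ) := by exact_mod_cast h.1
      linarith
    · exact le_rfl
  have hbval_le : ∀ y, bval y ≤ 2*(N:ℝ) := by
    intro y; rw [hbdef]; dsimp only; split_ifs with h
    · have h2 : (y:ℝ) ≤ (N:ℝ) := by exact_mod_cast h.2
      linarith
    · linarith
  -- independence
  have hindep : ∀ j : ℕ, IndepFun (fun ω => bval (Y j ω))
      (fun ω => if U (K+(j+1)) ω < q then (1:ℝ) else -1) μ := by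
    intro j
    have hmem : K+(j+1) ∈ ({K+(j+1)} : Finset ℕ) := Finset.mem_singleton_self _
    have hST : Disjoint (Finset.range (K+j+1)) ({K+(j+1)} : Finset ℕ) := by
      rw [Finset.disjoint_singleton_right, Finset.mem_range]
      omega
    have base := hUindep.indepFun_finset (Finset.range (K+j+1)) {K+(j+1)} hST hUmeas
    have hφm : Measurable (fun v : ((i : (Finset.range (K+j+1) : Finset ℕ)) → ℝ) =>
        bval (ERW12.ewalk q M
          (fun i => if h : K + i ∈ Finset.range (K+j+1) then v ⟨K+i, h⟩ else 0) j)) := by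
      apply hbval_meas.comp
      refine ERW12.ewalk_measurable (α := ((i : (Finset.range (K+j+1) : Finset ℕ)) → ℝ))
        (fun i v => if h : K + i ∈ Finset.range (K+j+1) then v ⟨K+i, h⟩ else 0) ?_ q M j
      intro i
      by_cases h : K + i ∈ Finset.range (K+j+1)
      · simp only [dif_pos h]
        exact measurable_pi_apply _
      · simp only [dif_neg h]
        exact measurable_const
    have hψm : Measurable (fun v : ((i : ({K+(j+1)} : Finset ℕ)) → ℝ) =>
        if v ⟨K+(j+1), hmem⟩ < q then (1:ℝ) else -1) :=
      Measurable.ite ((measurable_pi_apply _) measurableSet_Iio) measurable_const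
        measurable_const
    have hcomp := base.comp hφm hψm
    have h1 : ((fun v : ((i : (Finset.range (K+j+1) : Finset ℕ)) → ℝ) =>
          bval (ERW12.ewalk q M
            (fun i => if h : K + i ∈ Finset.range (K+j+1) then v ⟨K+i, h⟩ else 0) j))
        ∘ (fun a (i : (Finset.range (K+j+1) : Finset ℕ)) => U i a))
        = fun ω => bval (Y j ω) := by
      funext ω
      simp only [Function.comp_apply, hYdef]
      congr 1
      apply ERW12.ewalk_congr
      intro i hi1 hi2
      rw [dif_pos (by simp only [Finset.mem_range]; omega : K + i ∈ Finset.range (K+j+1))]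
    have h2 : ((fun v : ((i : ({K+(j+1)} : Finset ℕ)) → ℝ) =>
          if v ⟨K+(j+1), hmem⟩ < q then (1:ℝ) else -1)
        ∘ (fun a (i : ({K+(j+1)} : Finset ℕ)) => U i a))
        = fun ω => if U (K+(j+1)) ω < q then (1:ℝ) else -1 := rfl
    rw [← h1, ← h2]
    exact hcomp
  -- integrability
  have hYR : ∀ i ω, (0:ℝ) ≤ ((Y i ω : ℤ):ℝ) ∧ ((Y i ω : ℤ):ℝ) ≤ (N:ℝ)+1 := by
    intro i ω
    constructor
    · exact_mod_cast hYnn i ω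
    · have h2 : ((Y i ω : ℤ):ℝ) ≤ ((M : ℤ):ℝ) := by exact_mod_cast hYle i ω
      rw [hMdef] at h2; push_cast at h2; linarith
  have hfint : ∀ i, Integrable (fun ω => ((Y i ω : ℤ):ℝ)^2) μ := by
    intro i
    apply ERW12.integrable_of_bdd
      ((measurable_from_top (f := fun y : ℤ => ((y:ℝ))^2)).comp (hYmeas i)) (((N:ℝ)+1)^2)
    intro ω
    simp only [Function.comp_apply]
    obtain ⟨h1, h2⟩ := hYR i ω
    rw [abs_of_nonneg (sq_nonneg _)]
    nlinarith
  -- the key per-step estimate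
  have hkeyall : ∀ j, j < T → (μ A).toReal - 1/6 ≤
      (∫ ω, ((Y (j+1) ω : ℤ):ℝ)^2 ∂μ) - ∫ ω, ((Y j ω : ℤ):ℝ)^2 ∂μ := by
    intro j hj
    have hindm : MeasurableSet {ω' | Y j ω' ≤ (N:ℤ)} := (hYmeas j) hiicm
    have hpt : ∀ ω, ((Y (j+1) ω : ℤ) : ℝ)^2 - ((Y j ω : ℤ) : ℝ)^2 =
        (Set.indicator {ω' | Y j ω' ≤ (N:ℤ)} (fun _ => (1:ℝ)) ω)
          + bval (Y j ω) * (if U (K+(j+1)) ω < q then (1:ℝ) else -1) := by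
      intro ω
      have hynn := hYnn j ω
      have hyle := hYle j ω
      have hsucc : Y (j+1) ω = if Y j ω = M then M
          else if Y j ω = 0 then 1
          else Y j ω + (if U (K+(j+1)) ω < q then 1 else -1) := by
        rw [hYdef]; exact ERW12.ewalk_succ q M _ j
      by_cases hM' : Y j ω = M
      · rw [hsucc, if_pos hM', hM',
          Set.indicator_of_notMem (by simp only [Set.mem_setOf_eq]; omega),
          hbdef]
        dsimp only
        rw [if_neg (by omega)]
        ring
      · by_cases hy0 : Y j ω = 0
        · rw [hsucc, if_neg hM', if_pos hy0, hy0,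
            Set.indicator_of_mem (by simp only [Set.mem_setOf_eq]; omega),
            hbdef]
          dsimp only
          rw [if_neg (by omega)]
          norm_num
        · have hy1 : 1 ≤ Y j ω := by omega
          have hyN : Y j ω ≤ (N:ℤ) := by omega
          rw [hsucc, if_neg hM', if_neg hy0,
            Set.indicator_of_mem (by simp only [Set.mem_setOf_eq]; omega),
            hbdef]
          dsimp only
          rw [if_pos (show (1 ≤ Y j ω ∧ Y j ω ≤ (N:ℤ)) from ⟨hy1, hyN⟩)]
          by_cases hu : U (K+(j+1)) ω < q
          · rw [if_pos hu, if_pos hu]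
            push_cast
            ring
          · rw [if_neg hu, if_neg hu]
            push_cast
            ring
    have hint_ind : Integrable (Set.indicator {ω' | Y j ω' ≤ (N:ℤ)} (fun _ => (1:ℝ))) μ :=
      (integrable_const (1:ℝ)).indicator hindm
    have hbm : Measurable (fun ω => bval (Y j ω)) := hbval_meas.comp (hYmeas j)
    have hem : Measurable (fun ω => (if U (K+(j+1)) ω < q then (1:ℝ) else -1)) :=
      Measurable.ite ((hUmeas _) measurableSet_Iio) measurable_const measurable_const
    have hbb : ∀ ω, |bval (Y j ω)| ≤ 2*(N:ℝ) := fun ω => by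
      rw [abs_of_nonneg (hbval_nn _)]; exact hbval_le _
    have heb : ∀ ω, |(if U (K+(j+1)) ω < q then (1:ℝ) else -1)| ≤ 1 := fun ω => by
      split_ifs <;> simp
    have hint_b : Integrable (fun ω => bval (Y j ω)) μ := ERW12.integrable_of_bdd hbm _ hbb
    have hint_e : Integrable (fun ω => (if U (K+(j+1)) ω < q then (1:ℝ) else -1)) μ :=
      ERW12.integrable_of_bdd hem _ heb
    have hint_be : Integrable
        (fun ω => bval (Y j ω) * (if U (K+(j+1)) ω < q then (1:ℝ) else -1)) μ := by
      apply ERW12.integrable_of_bdd (hbm.mul hem) (2*(N:ℝ))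
      intro ω
      rw [Pi.mul_apply, abs_mul]
      have h1 := hbb ω; have h2 := heb ω
      nlinarith [abs_nonneg (bval (Y j ω)), abs_nonneg ((if U (K+(j+1)) ω < q then (1:ℝ) else -1))]
    have hprod : ∫ ω, bval (Y j ω) * (if U (K+(j+1)) ω < q then (1:ℝ) else -1) ∂μ
        = (∫ ω, bval (Y j ω) ∂μ) * ∫ ω, (if U (K+(j+1)) ω < q then (1:ℝ) else -1) ∂μ :=
      (hindep j).integral_fun_mul_eq_mul_integral hint_b.1 hint_e.1
    have hdiff : (∫ ω, ((Y (j+1) ω : ℤ):ℝ)^2 ∂μ) - ∫ ω, ((Y j ω : ℤ):ℝ)^2 ∂μ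
        = (μ {ω' | Y j ω' ≤ (N:ℤ)}).toReal + (∫ ω, bval (Y j ω) ∂μ) * (2*q - 1) := by
      rw [← integral_sub (hfint (j+1)) (hfint j)]
      rw [show (fun ω => ((Y (j+1) ω : ℤ):ℝ)^2 - ((Y j ω : ℤ):ℝ)^2)
          = fun ω => (Set.indicator {ω' | Y j ω' ≤ (N:ℤ)} (fun _ => (1:ℝ)) ω
            + bval (Y j ω) * (if U (K+(j+1)) ω < q then (1:ℝ) else -1)) from funext hpt]
      rw [integral_add hint_ind hint_be, hprod, hEe j,
        integral_indicator_const (1:ℝ) hindm]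
      simp
      rfl
    have hAsub : A ⊆ {ω' | Y j ω' ≤ (N:ℤ)} := by
      rw [hAdef]
      intro ω hA
      simp only [Set.mem_setOf_eq] at hA ⊢
      by_contra hcon
      push_neg at hcon
      have hyM : Y j ω = M := by have := hYle j ω; omega
      rw [hYdef] at hyM
      have habs := ERW12.ewalk_absorb hyM (le_of_lt hj)
      have hYTM : Y T ω = M := by rw [hYdef]; exact habs
      omega
    have hPle : (μ A).toReal ≤ (μ {ω' | Y j ω' ≤ (N:ℤ)}).toReal :=
      ENNReal.toReal_mono (measure_ne_top μ _) (measure_mono hAsub)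
    have hbint1 : (0:ℝ) ≤ ∫ ω, bval (Y j ω) ∂μ := integral_nonneg (fun ω => hbval_nn _)
    have hbint2 : (∫ ω, bval (Y j ω) ∂μ) ≤ 2*(N:ℝ) := by
      calc ∫ ω, bval (Y j ω) ∂μ ≤ ∫ _ω, 2*(N:ℝ) ∂μ :=
            integral_mono hint_b (integrable_const _) (fun ω => hbval_le _)
        _ = 2*(N:ℝ) := by simp
    have hq21 : 2*q - 1 ≤ 0 := by linarith
    have hmul : (2*(N:ℝ)) * (2*q - 1) ≤ (∫ ω, bval (Y j ω) ∂μ) * (2*q - 1) :=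
      mul_le_mul_of_nonpos_right hbint2 hq21
    have hNne : (N:ℝ) ≠ 0 := by linarith
    have hdne : (d:ℝ) ≠ 0 := by linarith
    have hconst : (2*(N:ℝ)) * (2*q - 1) = -(4*r/(d:ℝ)) := by
      rw [hqdef]
      field_simp
      ring
    have hrd : 4*r/(d:ℝ) ≤ 1/6 := by
      rw [div_le_iff₀ hd0]
      linarith
    rw [hdiff]
    linarith
  -- telescoping
  have hsum := Finset.sum_range_sub (fun i => ∫ ω, ((Y i ω : ℤ):ℝ)^2 ∂μ) T
  have h00 : (∫ ω, ((Y 0 ω : ℤ):ℝ)^2 ∂μ) = 0 := by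
    have hY0 : ∀ ω, Y 0 ω = 0 := fun ω => by simp [hYdef, ERW12.ewalk]
    have : (fun ω => ((Y 0 ω : ℤ):ℝ)^2) = fun _ => (0:ℝ) := by
      funext ω; rw [hY0 ω]; norm_num
    rw [this]
    simp
  have hTb : (∫ ω, ((Y T ω : ℤ):ℝ)^2 ∂μ) ≤ ((N:ℝ)+1)^2 := by
    calc (∫ ω, ((Y T ω : ℤ):ℝ)^2 ∂μ) ≤ ∫ _ω, ((N:ℝ)+1)^2 ∂μ := by
          apply integral_mono (hfint T) (integrable_const _)
          intro ω
          show ((Y T ω : ℤ):ℝ)^2 ≤ ((N:ℝ)+1)^2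
          obtain ⟨h1, h2⟩ := hYR T ω
          nlinarith
      _ = ((N:ℝ)+1)^2 := by simp
  have hlow : (T:ℝ) * ((μ A).toReal - 1/6) ≤
      (∫ ω, ((Y T ω : ℤ):ℝ)^2 ∂μ) - ∫ ω, ((Y 0 ω : ℤ):ℝ)^2 ∂μ := by
    rw [← hsum]
    calc (T:ℝ) * ((μ A).toReal - 1/6)
        = ∑ _j ∈ Finset.range T, ((μ A).toReal - 1/6) := by
          rw [Finset.sum_const, Finset.card_range, nsmul_eq_mul]
      _ ≤ ∑ j ∈ Finset.range T,
            ((∫ ω, ((Y (j+1) ω : ℤ):ℝ)^2 ∂μ) - ∫ ω, ((Y j ω : ℤ):ℝ)^2 ∂μ) :=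
          Finset.sum_le_sum (fun j hj => hkeyall j (Finset.mem_range.mp hj))
  have hTR : ((T:ℕ):ℝ) = 12*(N:ℝ)^2 := by rw [hTdef]; push_cast; ring
  have hNR2 : (1:ℝ) ≤ (N:ℝ)^2 := by nlinarith
  have hfinal : (μ A).toReal ≤ 5/6 := by
    have h1 : (12*(N:ℝ)^2) * ((μ A).toReal - 1/6) ≤ ((N:ℝ)+1)^2 := by
      rw [← hTR]; linarith
    have h4 : ((N:ℝ)+1)^2 ≤ 4*(N:ℝ)^2 := by nlinarith
    nlinarith [h1, h4, hNR2]
  calc μ {ω | c * (N:ℝ)^2 < (τ ω : ℝ)} ≤ μ A := measure_mono hsub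
    _ = ENNReal.ofReal ((μ A).toReal) := (ENNReal.ofReal_toReal (measure_ne_top μ A)).symm
    _ ≤ ENNReal.ofReal (5/6) := ENNReal.ofReal_le_ofReal hfinal
end
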